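/- For all c, D > 0, all t ≥ 0 and all μ with 0 ≤ μ < c/(2D), the function H̃₁ satisfies 0 ≤ H̃₁(μ,t) ≤ 1. -/

import Mathlib

open MeasureTheory Real Set

/-- `H̃₁(μ,t)` for the subcritical regime `0 ≤ μ < c/(2D)`. -/
noncomputable def Htilde1 (c D μ t : ℝ) : ℝ :=
  Real.exp (-(c ^ 2 * t) / (2 * D)) *
    (Real.cosh (c * t * Real.sqrt (c ^ 2 / (4 * D ^ 2) - μ ^ 2)) +
      c / (2 * D * Real.sqrt (c ^ 2 / (4 * D ^ 2) - μ ^ 2)) *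
        Real.sinh (c * t * Real.sqrt (c ^ 2 / (4 * D ^ 2) - μ ^ 2)))

/-- `H̃₂(μ,t)` for the supercritical regime `μ > c/(2D)`. -/
noncomputable def Htilde2 (c D μ t : ℝ) : ℝ :=
  Real.exp (-(c ^ 2 * t) / (2 * D)) *
    (Real.cos (c * t * Real.sqrt (μ ^ 2 - c ^ 2 / (4 * D ^ 2))) +
      c / (2 * D * Real.sqrt (μ ^ 2 - c ^ 2 / (4 * D ^ 2))) *
        Real.sin (c * t * Real.sqrt (μ ^ 2 - c ^ 2 / (4 * D ^ 2))))

/-- `H̃(μ,t)`, pieced together from `H̃₁`, the value at `μ = c/(2D)`, and `H̃₂`. -/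
noncomputable def Htilde (c D μ t : ℝ) : ℝ :=
  if μ < c / (2 * D) then Htilde1 c D μ t
  else if μ = c / (2 * D) then Real.exp (-(c ^ 2 * t) / (2 * D)) * (1 + c ^ 2 * t / (2 * D))
  else Htilde2 c D μ t

/-! With `x = c t √(c²/(4D²) - μ²)` and `k = c / (2D √(c²/(4D²) - μ²)) ≥ 1` one has
`H̃₁ = e^{-kx} (cosh x + k sinh x)`. Writing `cosh x + k sinh x = eˣ + (k - 1) sinh x`, the bounds
`sinh x ≤ x eˣ` and `1 + (k - 1) x ≤ e^{(k-1)x}` give `cosh x + k sinh x ≤ e^{kx}`. -/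

namespace Real

theorem sinh_le_mul_exp (x : ℝ) : sinh x ≤ x * exp x := by
  have hexp : exp (-x) = exp x * exp (-(2 * x)) := by rw [← exp_add]; ring_nf
  have hlin : 1 - 2 * x ≤ exp (-(2 * x)) := by linarith [add_one_le_exp (-(2 * x))]
  rw [sinh_eq, hexp]
  nlinarith [mul_le_mul_of_nonneg_left hlin (exp_pos x).le]

theorem cosh_add_mul_sinh_le_exp_mul {k : ℝ} (hk : 1 ≤ k) (x : ℝ) :
    cosh x + k * sinh x ≤ exp (k * x) :=
  calc cosh x + k * sinh x = exp x + (k - 1) * sinh x := by rw [← cosh_add_sinh]; ring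
    _ ≤ exp x + (k - 1) * (x * exp x) := by
      gcongr
      exact sinh_le_mul_exp x
    _ = exp x * ((k - 1) * x + 1) := by ring
    _ ≤ exp x * exp ((k - 1) * x) := by gcongr; exact add_one_le_exp _
    _ = exp (k * x) := by rw [← exp_add]; ring_nf

theorem exp_neg_mul_mul_cosh_add_mul_sinh_mem_Icc {k x : ℝ} (hk : 1 ≤ k) (hx : 0 ≤ x) :
    exp (-(k * x)) * (cosh x + k * sinh x) ∈ Icc 0 1 := by
  have hsinh : 0 ≤ sinh x := sinh_nonneg_iff.mpr hx
  refine ⟨by have := cosh_pos x; positivity, ?_⟩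
  rw [exp_neg, inv_mul_le_iff₀ (exp_pos _), mul_one]
  exact cosh_add_mul_sinh_le_exp_mul hk x

theorem sqrt_sq_sub_sq_mem_Ioc {r μ : ℝ} (hμ : 0 ≤ μ) (hμr : μ < r) :
    √(r ^ 2 - μ ^ 2) ∈ Ioc 0 r := by
  refine ⟨sqrt_pos.mpr (by nlinarith), ?_⟩
  calc √(r ^ 2 - μ ^ 2) ≤ √(r ^ 2) := sqrt_le_sqrt (by nlinarith)
    _ = r := sqrt_sq (by linarith)

end Real

theorem Htilde1_mem_Icc :
    ∀ c D t μ : ℝ, 0 < c → 0 < D → 0 ≤ t → 0 ≤ μ → μ < c / (2 * D) →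
      0 ≤ Htilde1 c D μ t ∧ Htilde1 c D μ t ≤ 1 := by
  intro c D t μ hc hD ht hμ hμc
  set s := √(c ^ 2 / (4 * D ^ 2) - μ ^ 2)
  have hs : s ∈ Ioc 0 (c / (2 * D)) := by
    have h := sqrt_sq_sub_sq_mem_Ioc hμ hμc
    rwa [show (c / (2 * D)) ^ 2 = c ^ 2 / (4 * D ^ 2) by ring] at h
  have hk : 1 ≤ c / (2 * D * s) := by
    rw [one_le_div₀ (by positivity [hs.1])]
    linarith [(le_div_iff₀ (by positivity)).mp hs.2]
  have hexponent : -(c ^ 2 * t) / (2 * D) = -(c / (2 * D * s) * (c * t * s)) := by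
    field_simp [hs.1.ne']
  unfold Htilde1
  rw [hexponent]
  exact exp_neg_mul_mul_cosh_add_mul_sinh_mem_Icc hk (by positivity [hs.1])
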